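/- Under the stated setting, suppose there exists a non-decreasing continuous function L : [0,∞) → [0,∞) such that |f(d,x,u)| + |g(d,x,u)| ≤ L(|(x,u)|)·|x|² + L(|(x,u)|)·|x|·|u| for all (d,x,u) ∈ D×ℝⁿ×ℝ. Then there exist constants R* > 0 and C ∈ (0,1] such that for every ω > 0 and every R ∈ (0,R*) there exist constants M > 0 and δ > 0 such that conditions (3.3), (3.4), (3.5) hold with K = C·R. -/

import Mathlib

open Matrix MeasureTheory Set Filter

noncomputable section

/-- The `m × m` matrix with ones on the subdiagonal and zeros elsewhere. -/
def matA (m : ℕ) : Matrix (Fin m) (Fin m) ℝ :=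
  Matrix.of fun i j => if (i : ℕ) = (j : ℕ) + 1 then 1 else 0

/-- The vector `b = (1,0,…,0)'` as a plain function. -/
def vecbf (m : ℕ) : Fin m → ℝ := fun i => if (i : ℕ) = 0 then 1 else 0

/-- The vector `b = (1,0,…,0)'` in Euclidean space. -/
def vecb (m : ℕ) : EuclideanSpace ℝ (Fin m) := (WithLp.equiv 2 (Fin m → ℝ)).symm (vecbf m)

/-- View a Euclidean vector as a plain function. -/
def ef {m : ℕ} (x : EuclideanSpace ℝ (Fin m)) : Fin m → ℝ := x

/-- Matrix-vector multiplication on Euclidean space. -/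
def mulVecE {m : ℕ} (M : Matrix (Fin m) (Fin m) ℝ) (x : EuclideanSpace ℝ (Fin m)) :
    EuclideanSpace ℝ (Fin m) :=
  (WithLp.equiv 2 (Fin m → ℝ)).symm (M.mulVec (ef x))

/-- Euclidean inner product `x'y`. -/
def ip {m : ℕ} (x y : EuclideanSpace ℝ (Fin m)) : ℝ := ∑ i, x i * y i

/-- Quadratic form `x'Px`. -/
def qf {m : ℕ} (P : Matrix (Fin m) (Fin m) ℝ) (x : EuclideanSpace ℝ (Fin m)) : ℝ :=
  ip x (mulVecE P x)

/-- The saturation function `sat(s) = s / max(1,|s|)`. -/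
def sat (s : ℝ) : ℝ := s / max 1 |s|

/-- The vector `c = -(A' + pb')⁻¹ (0,…,0,1)'`. -/
def cvec (n : ℕ) (p : EuclideanSpace ℝ (Fin (n+1))) : EuclideanSpace ℝ (Fin (n+1)) :=
  (WithLp.equiv 2 (Fin (n+1) → ℝ)).symm
    (-((((matA (n+1))ᵀ + vecMulVec (ef p) (vecbf (n+1)))⁻¹).mulVec (Pi.single (Fin.last n) 1)))

/-- Condition (3.3): `x'P(Ax + f(d,x,u) + bu) < 0` whenever `d ∈ D`, `x'Px = R²` and
`|u - p'x| ≤ K|c'b|`. -/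
def Cond33 {l n : ℕ} (D : Set (EuclideanSpace ℝ (Fin l)))
    (f : EuclideanSpace ℝ (Fin l) → EuclideanSpace ℝ (Fin (n+1)) → ℝ → EuclideanSpace ℝ (Fin (n+1)))
    (P : Matrix (Fin (n+1)) (Fin (n+1)) ℝ) (p : EuclideanSpace ℝ (Fin (n+1))) (R K : ℝ) : Prop :=
  ∀ d ∈ D, ∀ x : EuclideanSpace ℝ (Fin (n+1)), ∀ u : ℝ,
    qf P x = R ^ 2 → |u - ip p x| ≤ K * |ip (cvec n p) (vecb (n+1))| →
      ip x (mulVecE P (mulVecE (matA (n+1)) x + f d x u + u • vecb (n+1))) < 0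

/-- Condition (3.4): `|g(d,x,u) + c'f(d,x,u)| < K(c'b)²` whenever `d ∈ D`, `x'Px ≤ R²` and
`|u - p'x| ≤ K|c'b|`. -/
def Cond34 {l n : ℕ} (D : Set (EuclideanSpace ℝ (Fin l)))
    (f : EuclideanSpace ℝ (Fin l) → EuclideanSpace ℝ (Fin (n+1)) → ℝ → EuclideanSpace ℝ (Fin (n+1)))
    (g : EuclideanSpace ℝ (Fin l) → EuclideanSpace ℝ (Fin (n+1)) → ℝ → ℝ)
    (P : Matrix (Fin (n+1)) (Fin (n+1)) ℝ) (p : EuclideanSpace ℝ (Fin (n+1))) (R K : ℝ) : Prop :=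
  ∀ d ∈ D, ∀ x : EuclideanSpace ℝ (Fin (n+1)), ∀ u : ℝ,
    qf P x ≤ R ^ 2 → |u - ip p x| ≤ K * |ip (cvec n p) (vecb (n+1))| →
      |g d x u + ip (cvec n p) (f d x u)| < K * (ip (cvec n p) (vecb (n+1))) ^ 2

/-- Condition (3.5). -/
def Cond35 {l n : ℕ} (D : Set (EuclideanSpace ℝ (Fin l)))
    (f : EuclideanSpace ℝ (Fin l) → EuclideanSpace ℝ (Fin (n+1)) → ℝ → EuclideanSpace ℝ (Fin (n+1)))
    (g : EuclideanSpace ℝ (Fin l) → EuclideanSpace ℝ (Fin (n+1)) → ℝ → ℝ)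
    (P : Matrix (Fin (n+1)) (Fin (n+1)) ℝ) (p : EuclideanSpace ℝ (Fin (n+1)))
    (M R K ω δ : ℝ) : Prop :=
  ∀ d ∈ D, ∀ x : EuclideanSpace ℝ (Fin (n+1)), ∀ z : ℝ,
    qf P x ≤ R ^ 2 → ω * |z| ≤ 1 →
      ∀ u : ℝ, u = ip p x - K * ip (cvec n p) (vecb (n+1)) * ω * z →
        z * (M * g d x u + M * ip (cvec n p) (f d x u)
              - K * ip (cvec n p) (vecb (n+1)) * ω * ip (vecb (n+1)) (mulVecE P x))
          ≤ (M * K * (ip (cvec n p) (vecb (n+1))) ^ 2 * ω - δ) * z ^ 2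
            - ip x (mulVecE P
                (mulVecE (matA (n+1) + vecMulVec (vecbf (n+1)) (ef p) + δ • 1) x + f d x u))


open scoped RealInnerProductSpace
open Topology

/-! Write `S = A + bp'` and `v = u - p'x`, so that `Ax + bu = Sx + bv`; the Lyapunov inequality
gives `x'PSx ≤ -λ|x|²`. On the ellipsoid `x'Px ≤ R²` with `|v| ≤ K|c'b|` and `K = CR ≤ R`, both
`|x|` and `|v|` are `O(R)`, so by the growth bound `f` and `g` are `O(R)·|x|` and every nonlinear
term is dominated by `λ|x|²` once `R` is small. The linear term `v·x'Pb` in (3.3) is only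
`O(C)·|x|²`, since `R = O(|x|)` on the boundary of the ellipsoid: this fixes `C`. In (3.4) the left
side is `O(R²)` against `CR(c'b)²`, where `c'b ≠ 0` because `S` is invertible and has companion
form. In (3.5) the cross terms in `z·x` are split by AM-GM between `λ|x|²` and `MK(c'b)²ωz²`,
which makes `M` of order `Kω`. -/

lemma ip_eq_inner {m : ℕ} (x y : EuclideanSpace ℝ (Fin m)) : ip x y = ⟪x, y⟫ := by
  simp [ip, PiLp.inner_apply, mul_comm]

lemma mulVecE_eq_toEuclideanCLM {m : ℕ} (M : Matrix (Fin m) (Fin m) ℝ)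
    (x : EuclideanSpace ℝ (Fin m)) : mulVecE M x = Matrix.toEuclideanCLM (𝕜 := ℝ) M x :=
  rfl

lemma qf_eq_inner {m : ℕ} (M : Matrix (Fin m) (Fin m) ℝ) (x : EuclideanSpace ℝ (Fin m)) :
    qf M x = ⟪x, Matrix.toEuclideanCLM (𝕜 := ℝ) M x⟫ :=
  ip_eq_inner _ _

lemma abs_ip_le {m : ℕ} (x y : EuclideanSpace ℝ (Fin m)) : |ip x y| ≤ ‖x‖ * ‖y‖ := by
  rw [ip_eq_inner]; exact abs_real_inner_le_norm x y

lemma ip_mulVecE_add {m : ℕ} (M : Matrix (Fin m) (Fin m) ℝ) (x y z : EuclideanSpace ℝ (Fin m)) :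
    ip x (mulVecE M (y + z)) = ip x (mulVecE M y) + ip x (mulVecE M z) := by
  simp only [ip_eq_inner, mulVecE_eq_toEuclideanCLM, map_add, inner_add_right]

lemma mulVecE_add_smul_one {m : ℕ} (M : Matrix (Fin m) (Fin m) ℝ) (δ : ℝ)
    (x : EuclideanSpace ℝ (Fin m)) : mulVecE (M + δ • 1) x = mulVecE M x + δ • x := by
  simp [mulVecE_eq_toEuclideanCLM]

lemma norm_vecb (m : ℕ) : ‖vecb (m + 1)‖ = 1 := by
  rw [EuclideanSpace.norm_eq, Real.sqrt_eq_one, Fin.sum_univ_succ]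
  simp [vecb, vecbf]

theorem exists_pos_mul_sq_norm_le {E : Type*} [NormedAddCommGroup E] [NormedSpace ℝ E]
    [ProperSpace E] [Nontrivial E] {q : E → ℝ} (hq : Continuous q)
    (hsmul : ∀ (t : ℝ) (x : E), q (t • x) = t ^ 2 * q x) (hpos : ∀ x ≠ 0, 0 < q x) :
    ∃ m > 0, ∀ x, m * ‖x‖ ^ 2 ≤ q x := by
  obtain ⟨x₀, hx₀, hmin⟩ := (isCompact_sphere (0 : E) 1).exists_isMinOn
    (NormedSpace.sphere_nonempty.2 zero_le_one) hq.continuousOn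
  have hx₀ : ‖x₀‖ = 1 := by simpa using hx₀
  refine ⟨q x₀, hpos x₀ (norm_ne_zero_iff.1 (by simp [hx₀])), fun x => ?_⟩
  rcases eq_or_ne x 0 with rfl | hx
  · simpa using (hsmul 0 0).ge
  have hx' : 0 < ‖x‖ := norm_pos_iff.2 hx
  have hunit : q x₀ ≤ q (‖x‖⁻¹ • x) := hmin (by simp [norm_smul, hx'.ne'])
  calc q x₀ * ‖x‖ ^ 2 ≤ q (‖x‖⁻¹ • x) * ‖x‖ ^ 2 := by gcongr
    _ = q x := by rw [hsmul]; field_simp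

theorem Matrix.PosDef.exists_pos_mul_sq_norm_le_qf {m : ℕ}
    {Q : Matrix (Fin (m + 1)) (Fin (m + 1)) ℝ} (hQ : Q.PosDef) :
    ∃ μ > 0, ∀ x, μ * ‖x‖ ^ 2 ≤ qf Q x := by
  refine exists_pos_mul_sq_norm_le ?_ (fun t x => ?_) (fun x hx => ?_)
  · simp only [funext (qf_eq_inner Q)]
    fun_prop
  · simp only [qf_eq_inner, map_smul, real_inner_smul_left, real_inner_smul_right]
    ring
  · simpa [qf, ip, mulVecE, ef, dotProduct] using
      hQ.dotProduct_mulVec_pos (x := ef x) (by simpa [ef] using hx)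

theorem Matrix.PosDef.exists_norm_le_mul_of_qf_le_sq {m : ℕ}
    {P : Matrix (Fin (m + 1)) (Fin (m + 1)) ℝ} (hP : P.PosDef) :
    ∃ a > 0, ∀ {R : ℝ}, 0 ≤ R → ∀ x, qf P x ≤ R ^ 2 → ‖x‖ ≤ a * R := by
  obtain ⟨μ, hμ, hq⟩ := hP.exists_pos_mul_sq_norm_le_qf
  refine ⟨(√μ)⁻¹, by positivity, fun hR x hx => ?_⟩
  refine (pow_le_pow_iff_left₀ (norm_nonneg x) (by positivity) two_ne_zero).1 ?_
  rw [mul_pow, inv_pow, Real.sq_sqrt hμ.le, inv_mul_eq_div, le_div_iff₀ hμ]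
  linarith [hq x]

theorem exists_abs_ip_mulVecE_le {m : ℕ} (M : Matrix (Fin m) (Fin m) ℝ) :
    ∃ c > 0, ∀ x y, |ip x (mulVecE M y)| ≤ c * ‖x‖ * ‖y‖ := by
  set T := Matrix.toEuclideanCLM (𝕜 := ℝ) M
  refine ⟨‖T‖ + 1, by positivity, fun x y => ?_⟩
  calc |ip x (mulVecE M y)| ≤ ‖x‖ * (‖T‖ * ‖y‖) :=
        (abs_ip_le _ _).trans (by gcongr; exact T.le_opNorm y)
    _ ≤ (‖T‖ + 1) * ‖x‖ * ‖y‖ := by nlinarith [norm_nonneg x, norm_nonneg y]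

theorem ip_mulVecE_le_of_norm_le {m : ℕ} {P : Matrix (Fin m) (Fin m) ℝ} {cP k t : ℝ}
    (hcP : ∀ x y, |ip x (mulVecE P y)| ≤ cP * ‖x‖ * ‖y‖) (hcP0 : 0 ≤ cP)
    {x y : EuclideanSpace ℝ (Fin m)} (hy : ‖y‖ ≤ k * ‖x‖) (hk : cP * k ≤ t) :
    ip x (mulVecE P y) ≤ t * ‖x‖ ^ 2 :=
  calc ip x (mulVecE P y) ≤ cP * ‖x‖ * ‖y‖ := (le_abs_self _).trans (hcP x y)
    _ ≤ cP * ‖x‖ * (k * ‖x‖) := by gcongr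
    _ = cP * k * ‖x‖ ^ 2 := by ring
    _ ≤ t * ‖x‖ ^ 2 := by gcongr

theorem Matrix.two_mul_dotProduct_mulVec_mulVec {ι R : Type*} [Fintype ι] [CommRing R]
    {P : Matrix ι ι R} (hP : P.IsSymm) (S : Matrix ι ι R) (x : ι → R) :
    2 * (x ⬝ᵥ P *ᵥ S *ᵥ x) = x ⬝ᵥ (P * S + Sᵀ * P) *ᵥ x := by
  have hsymm : x ⬝ᵥ Sᵀ *ᵥ P *ᵥ x = x ⬝ᵥ P *ᵥ S *ᵥ x := by
    have hP' : x ᵥ* P = P *ᵥ x := by rw [← vecMul_transpose, hP.eq]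
    rw [dotProduct_mulVec x Sᵀ, vecMul_transpose, dotProduct_mulVec x P, hP', dotProduct_comm]
  rw [add_mulVec, dotProduct_add, ← mulVec_mulVec, ← mulVec_mulVec, hsymm]
  ring

theorem Matrix.det_ne_zero_of_posDef_neg_lyapunov {ι : Type*} [Fintype ι] [DecidableEq ι]
    {P S : Matrix ι ι ℝ} (h : (-(P * S + Sᵀ * P)).PosDef) : S.det ≠ 0 := by
  intro hdet
  obtain ⟨v, hv, hSv⟩ := exists_mulVec_eq_zero_iff.2 hdet
  have := h.dotProduct_mulVec_pos hv
  rw [neg_mulVec, add_mulVec, ← mulVec_mulVec, ← mulVec_mulVec, hSv, mulVec_zero, zero_add,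
    dotProduct_neg, star_trivial, dotProduct_mulVec, vecMul_transpose, hSv, zero_dotProduct,
    neg_zero] at this
  exact lt_irrefl _ this

theorem exists_ip_mulVecE_mulVecE_le {m : ℕ} {P S : Matrix (Fin (m+1)) (Fin (m+1)) ℝ}
    (hP : P.IsSymm) (h : (-(P * S + Sᵀ * P)).PosDef) :
    ∃ μ > 0, ∀ x, ip x (mulVecE P (mulVecE S x)) ≤ -μ * ‖x‖ ^ 2 := by
  obtain ⟨μ, hμ, hQ⟩ := h.exists_pos_mul_sq_norm_le_qf
  refine ⟨μ / 2, by positivity, fun x => ?_⟩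
  have h2 := two_mul_dotProduct_mulVec_mulVec hP S (ef x)
  have hq : qf (-(P * S + Sᵀ * P)) x = -(ef x ⬝ᵥ (P * S + Sᵀ * P) *ᵥ ef x) := by
    rw [← dotProduct_neg, ← neg_mulVec]; rfl
  have hPS : ip x (mulVecE P (mulVecE S x)) = ef x ⬝ᵥ P *ᵥ S *ᵥ ef x := rfl
  linarith [hQ x]

def matS (n : ℕ) (p : EuclideanSpace ℝ (Fin (n+1))) : Matrix (Fin (n+1)) (Fin (n+1)) ℝ :=
  matA (n+1) + vecMulVec (vecbf (n+1)) (ef p)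

lemma transpose_matS (n : ℕ) (p : EuclideanSpace ℝ (Fin (n+1))) :
    (matS n p)ᵀ = (matA (n+1))ᵀ + vecMulVec (ef p) (vecbf (n+1)) := by
  simp [matS, transpose_vecMulVec]

lemma mulVecE_matS (n : ℕ) (p x : EuclideanSpace ℝ (Fin (n+1))) :
    mulVecE (matS n p) x = mulVecE (matA (n+1)) x + ip p x • vecb (n+1) := by
  ext i
  simp [matS, mulVecE, vecb, add_mulVec, vecMulVec_mulVec, ip, ef, dotProduct, mul_comm]

/-- With `w = (S')⁻¹ eₙ` we have `c'b = -w₀`, while the last row of `S'` is `pₙ b'`, so that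
`pₙ w₀ = 1`. -/
theorem ip_cvec_vecb_ne_zero {n : ℕ} {p : EuclideanSpace ℝ (Fin (n+1))}
    (h : (matS n p).det ≠ 0) : ip (cvec n p) (vecb (n+1)) ≠ 0 := by
  set B := (matS n p)ᵀ
  set w := B⁻¹ *ᵥ Pi.single (Fin.last n) 1
  have hBw : B *ᵥ w = Pi.single (Fin.last n) 1 := by
    rw [mulVec_mulVec, mul_nonsing_inv _ (by simpa [B] using h.isUnit), one_mulVec]
  have hrow : ∀ j, B (Fin.last n) j = p (Fin.last n) * vecbf (n+1) j := by
    intro j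
    have : (j : ℕ) ≠ n + 1 := by omega
    simp [B, matS, matA, vecMulVec_apply, ef, this]
  have hlast : p (Fin.last n) * (vecbf (n+1) ⬝ᵥ w) = 1 := by
    have := congrFun hBw (Fin.last n)
    simpa only [mulVec, dotProduct, hrow, mul_assoc, ← Finset.mul_sum, Pi.single_eq_same]
      using this
  have hcb : ip (cvec n p) (vecb (n+1)) = -(vecbf (n+1) ⬝ᵥ w) := by
    simp [ip, cvec, vecb, dotProduct, w, B, transpose_matS, mul_comm]
  intro h0
  rw [hcb, neg_eq_zero] at h0
  simp [h0] at hlast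

theorem mul_le_mul_sq_add_of_sq_le {μ B e q : ℝ} (hμ : 0 < μ) (h : q ^ 2 ≤ 4 * μ * B) :
    e * q ≤ μ * e ^ 2 + B := by
  nlinarith [sq_nonneg (2 * μ * e - q)]

lemma abs_add_ip_le {m : ℕ} (a : ℝ) (c y : EuclideanSpace ℝ (Fin m)) :
    |a + ip c y| ≤ (1 + ‖c‖) * (‖y‖ + |a|) := by
  have := abs_ip_le c y
  calc |a + ip c y| ≤ |a| + ‖c‖ * ‖y‖ := (abs_add_le _ _).trans (by gcongr)
    _ ≤ (1 + ‖c‖) * (‖y‖ + |a|) := by nlinarith [norm_nonneg c, norm_nonneg y, abs_nonneg a]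

theorem exists_pos_le_one_mul_le {k t : ℝ} (hk : 0 ≤ k) (ht : 0 < t) :
    ∃ C > 0, C ≤ 1 ∧ k * C ≤ t := by
  refine ⟨min 1 (t / (k + 1)), lt_min one_pos (by positivity), min_le_left _ _, ?_⟩
  calc k * min 1 (t / (k + 1)) ≤ (k + 1) * (t / (k + 1)) :=
        mul_le_mul (by linarith) (min_le_right _ _) (by positivity) (by positivity)
    _ = t := by field_simp

theorem exists_pos_forall_mul_of_eventually {Q : ℝ → Prop} (h : ∀ᶠ ρ in 𝓝 (0 : ℝ), Q ρ)
    (κ : ℝ) : ∃ Rstar > 0, ∀ R, 0 < R → R < Rstar → Q (κ * R) := by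
  have hκ : Tendsto (κ * ·) (𝓝[>] 0) (𝓝 0) :=
    ((continuous_const.mul continuous_id).tendsto' 0 0 (mul_zero _)).mono_left nhdsWithin_le_nhds
  obtain ⟨Rstar, hRstar, hsub⟩ := mem_nhdsGT_iff_exists_Ioo_subset.1 (hκ.eventually h)
  exact ⟨Rstar, hRstar, fun R hR hRR => hsub ⟨hR, hRR⟩⟩

theorem eventually_mul_lt (k : ℝ) {t : ℝ} (ht : 0 < t) : ∀ᶠ ρ in 𝓝 (0 : ℝ), k * ρ < t :=
  (continuous_const.mul continuous_id).continuousAt.eventually_lt continuousAt_const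
    (by simpa using ht)

/-- The growth bound in the coordinates `(x, v) = (x, u - p'x)`: the quantity
`(1 + ‖p‖)‖x‖ + |v|` dominates `‖x‖ + |u|`. -/
def LocalQuadraticBound {l n : ℕ} (D : Set (EuclideanSpace ℝ (Fin l)))
    (f : EuclideanSpace ℝ (Fin l) → EuclideanSpace ℝ (Fin (n+1)) → ℝ → EuclideanSpace ℝ (Fin (n+1)))
    (g : EuclideanSpace ℝ (Fin l) → EuclideanSpace ℝ (Fin (n+1)) → ℝ → ℝ)
    (p : EuclideanSpace ℝ (Fin (n+1))) (L₁ : ℝ) : Prop :=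
  ∀ d ∈ D, ∀ x u, (1 + ‖p‖) * ‖x‖ + |u - ip p x| ≤ 1 →
    ‖f d x u‖ + |g d x u| ≤ L₁ * ((1 + ‖p‖) * ‖x‖ + |u - ip p x|) * ‖x‖

/-- The cross terms of (3.5), with `F = g + c'f`, `Y = b'Px`, `X = ‖x‖` and `|v| = Kβω|z|`.
The choice of `M` makes `(Kβ ω cP X)² = MKβ²ω · lQ X² / 4`, so AM-GM splits `|z| · Kβω cP X`
evenly between `z²` and `X²`. -/
theorem cond35_cross_terms_le {M K ω cP lQ β a₀ s X z F Y : ℝ} (hK : 0 < K) (hω : 0 < ω)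
    (hcP : 0 ≤ cP) (hlQ : 0 < lQ) (hβ : β ≠ 0) (hM0 : 0 < M) (hM : M * lQ = 4 * K * ω * cP ^ 2)
    (hX : 0 ≤ X) (hF : |F| ≤ a₀ * (s * X + K * |β| * ω * |z|) * X)
    (hY : |Y| ≤ cP * X) (hsX : 4 * cP * a₀ * s * X ≤ |β| * lQ) (hX' : a₀ * X ≤ |β| / 4) :
    z * (M * F) - z * (K * β * ω * Y) ≤ 3 * (M * K * β ^ 2 * ω / 4) * z ^ 2 + lQ / 2 * X ^ 2 := by
  set μ := M * K * β ^ 2 * ω / 4 with hμ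
  have hμ0 : 0 < μ := by have := pow_pos (abs_pos.2 hβ) 2; rw [sq_abs] at this; positivity
  set q := K * |β| * ω * cP * X
  have hyoung : |z| * q ≤ μ * z ^ 2 + lQ / 4 * X ^ 2 := by
    rw [← sq_abs z]
    refine mul_le_mul_sq_add_of_sq_le hμ0 (le_of_eq ?_)
    rw [hμ]
    linear_combination (-(K * β ^ 2 * ω * X ^ 2) / 4) * hM + (K ^ 2 * ω ^ 2 * cP ^ 2 * X ^ 2) * sq_abs β
  have hA : M * (a₀ * s * X) ≤ K * |β| * ω * cP := by
    refine le_of_mul_le_mul_left ?_ hlQ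
    calc lQ * (M * (a₀ * s * X)) = K * ω * cP * (4 * cP * a₀ * s * X) := by
          linear_combination (a₀ * s * X) * hM
      _ ≤ K * ω * cP * (|β| * lQ) := by gcongr
      _ = lQ * (K * |β| * ω * cP) := by ring
  have hzF : z * (M * F) ≤ |z| * q + μ * z ^ 2 :=
    calc z * (M * F) ≤ M * (|z| * (a₀ * (s * X + K * |β| * ω * |z|) * X)) := by
          rw [mul_left_comm]
          refine mul_le_mul_of_nonneg_left ((le_abs_self _).trans ?_) hM0.le
          rw [abs_mul]; gcongr
      _ = |z| * X * (M * (a₀ * s * X)) + M * K * |β| * ω * |z| ^ 2 * (a₀ * X) := by ring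
      _ ≤ |z| * X * (K * |β| * ω * cP) + M * K * |β| * ω * |z| ^ 2 * (|β| / 4) := by gcongr
      _ = |z| * q + μ * z ^ 2 := by rw [hμ, sq_abs z, ← sq_abs β]; ring
  have hzY : -(z * (K * β * ω * Y)) ≤ |z| * q :=
    calc -(z * (K * β * ω * Y)) ≤ |z| * (K * |β| * ω * |Y|) := by
          refine (neg_le_abs _).trans_eq ?_
          rw [abs_mul, abs_mul, abs_mul, abs_mul, abs_of_pos hK, abs_of_pos hω]
      _ ≤ |z| * (K * |β| * ω * (cP * X)) := by gcongr
      _ = |z| * q := by ring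
  linarith

section Estimates

variable {n l : ℕ} {D : Set (EuclideanSpace ℝ (Fin l))}
  {f : EuclideanSpace ℝ (Fin l) → EuclideanSpace ℝ (Fin (n+1)) → ℝ → EuclideanSpace ℝ (Fin (n+1))}
  {g : EuclideanSpace ℝ (Fin l) → EuclideanSpace ℝ (Fin (n+1)) → ℝ → ℝ}
  {P : Matrix (Fin (n+1)) (Fin (n+1)) ℝ} {p : EuclideanSpace ℝ (Fin (n+1))}
  {a cP lQ L₁ C R ρ : ℝ}

theorem localQuadraticBound_of_growth {L : ℝ → ℝ} (hLmono : MonotoneOn L (Ici 0))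
    (hLnn : ∀ s : ℝ, 0 ≤ s → 0 ≤ L s)
    (hgrowth : ∀ d ∈ D, ∀ x : EuclideanSpace ℝ (Fin (n+1)), ∀ u : ℝ,
      ‖f d x u‖ + |g d x u| ≤ L (Real.sqrt (‖x‖ ^ 2 + u ^ 2)) * ‖x‖ ^ 2
        + L (Real.sqrt (‖x‖ ^ 2 + u ^ 2)) * ‖x‖ * |u|) :
    LocalQuadraticBound D f g p (L 1) := by
  intro d hd x u h
  set s := Real.sqrt (‖x‖ ^ 2 + u ^ 2)
  have hu : ‖x‖ + |u| ≤ (1 + ‖p‖) * ‖x‖ + |u - ip p x| := by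
    have := abs_ip_le p x
    have := abs_sub_abs_le_abs_sub u (ip p x)
    linarith [le_abs_self (ip p x)]
  have hs : s ≤ 1 := Real.sqrt_le_one.2 (by nlinarith [norm_nonneg x, abs_nonneg u, sq_abs u])
  have hLs : L s ≤ L 1 := hLmono (Real.sqrt_nonneg _) (mem_Ici.2 zero_le_one) hs
  have hL1 : 0 ≤ L 1 := hLnn 1 zero_le_one
  calc ‖f d x u‖ + |g d x u| ≤ L s * ‖x‖ ^ 2 + L s * ‖x‖ * |u| := hgrowth d hd x u
    _ = L s * (‖x‖ + |u|) * ‖x‖ := by ring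
    _ ≤ L 1 * ((1 + ‖p‖) * ‖x‖ + |u - ip p x|) * ‖x‖ := by
        gcongr

theorem LocalQuadraticBound.norm_add_abs_le (hfg : LocalQuadraticBound D f g p L₁)
    (hL₁ : 0 ≤ L₁) (hρ1 : ρ ≤ 1) {d} (hd : d ∈ D) {x u}
    (h : (1 + ‖p‖) * ‖x‖ + |u - ip p x| ≤ ρ) : ‖f d x u‖ + |g d x u| ≤ L₁ * ρ * ‖x‖ :=
  (hfg d hd x u (h.trans hρ1)).trans (by gcongr)

theorem LocalQuadraticBound.abs_add_ip_le (hfg : LocalQuadraticBound D f g p L₁) {d}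
    (hd : d ∈ D) {x u} (h : (1 + ‖p‖) * ‖x‖ + |u - ip p x| ≤ 1) (c : EuclideanSpace ℝ (Fin (n+1))) :
    |g d x u + ip c (f d x u)| ≤ (1 + ‖c‖) * L₁ * ((1 + ‖p‖) * ‖x‖ + |u - ip p x|) * ‖x‖ :=
  calc |g d x u + ip c (f d x u)| ≤ (1 + ‖c‖) * (‖f d x u‖ + |g d x u|) :=
        _root_.abs_add_ip_le _ _ _
    _ ≤ (1 + ‖c‖) * (L₁ * ((1 + ‖p‖) * ‖x‖ + |u - ip p x|) * ‖x‖) := by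
        gcongr; exact hfg d hd x u h
    _ = _ := by ring

theorem add_abs_sub_le_of_qf_le (hxR : ∀ x, qf P x ≤ R ^ 2 → ‖x‖ ≤ a * R)
    (hρ : ((1 + ‖p‖) * a + |ip (cvec n p) (vecb (n+1))|) * R ≤ ρ) (hC1 : C ≤ 1) (hR : 0 ≤ R)
    {x u} (hx : qf P x ≤ R ^ 2) (hu : |u - ip p x| ≤ C * R * |ip (cvec n p) (vecb (n+1))|) :
    (1 + ‖p‖) * ‖x‖ + |u - ip p x| ≤ ρ := by
  have h1 : (1 + ‖p‖) * ‖x‖ ≤ (1 + ‖p‖) * (a * R) := by gcongr; exact hxR x hx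
  have h2 : C * R * |ip (cvec n p) (vecb (n+1))| ≤ R * |ip (cvec n p) (vecb (n+1))| := by
    gcongr; nlinarith
  linarith

theorem cond33_of_small (hS : ∀ x, ip x (mulVecE P (mulVecE (matS n p) x)) ≤ -lQ * ‖x‖ ^ 2)
    (hlQ : 0 < lQ) (hcP : ∀ x y, |ip x (mulVecE P y)| ≤ cP * ‖x‖ * ‖y‖) (hcP0 : 0 ≤ cP)
    (hxR : ∀ x, qf P x ≤ R ^ 2 → ‖x‖ ≤ a * R) (hfg : LocalQuadraticBound D f g p L₁)
    (hL₁ : 0 ≤ L₁) (hR : 0 < R) (hC0 : 0 ≤ C) (hC1 : C ≤ 1)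
    (hC : cP * |ip (cvec n p) (vecb (n+1))| * √cP * C ≤ lQ / 4)
    (hρ : ((1 + ‖p‖) * a + |ip (cvec n p) (vecb (n+1))|) * R ≤ ρ) (hρ1 : ρ ≤ 1)
    (hρf : cP * L₁ * ρ ≤ lQ / 4) :
    Cond33 D f P p R (C * R) := by
  intro d hd x u hx hu
  have hreg := add_abs_sub_le_of_qf_le hxR hρ hC1 hR.le hx.le hu
  have hx0 : 0 < ‖x‖ := by
    refine norm_pos_iff.2 fun h0 => (pow_pos hR 2).ne' ?_
    rw [← hx, h0]
    simp [qf, ip]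
  have hRx : R ≤ √cP * ‖x‖ := by
    have : R ^ 2 ≤ (√cP * ‖x‖) ^ 2 := by
      rw [mul_pow, Real.sq_sqrt hcP0, ← hx]
      calc qf P x ≤ cP * ‖x‖ * ‖x‖ := (le_abs_self _).trans (hcP x x)
        _ = cP * ‖x‖ ^ 2 := by ring
    exact (pow_le_pow_iff_left₀ hR.le (by positivity) two_ne_zero).1 this
  have hsplit : mulVecE (matA (n+1)) x + f d x u + u • vecb (n+1)
      = mulVecE (matS n p) x + (f d x u + (u - ip p x) • vecb (n+1)) := by
    rw [mulVecE_matS, sub_smul]; abel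
  have hf : ip x (mulVecE P (f d x u)) ≤ lQ / 4 * ‖x‖ ^ 2 :=
    ip_mulVecE_le_of_norm_le hcP hcP0
      ((le_add_of_nonneg_right (abs_nonneg _)).trans (hfg.norm_add_abs_le hL₁ hρ1 hd hreg))
      (by rwa [← mul_assoc])
  have hv : ip x (mulVecE P ((u - ip p x) • vecb (n+1))) ≤ lQ / 4 * ‖x‖ ^ 2 := by
    refine ip_mulVecE_le_of_norm_le hcP hcP0 (k := C * |ip (cvec n p) (vecb (n+1))| * √cP) ?_
      (by linarith)
    calc ‖(u - ip p x) • vecb (n+1)‖ = |u - ip p x| := by simp [norm_smul, norm_vecb]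
      _ ≤ C * R * |ip (cvec n p) (vecb (n+1))| := hu
      _ ≤ C * (√cP * ‖x‖) * |ip (cvec n p) (vecb (n+1))| := by gcongr
      _ = C * |ip (cvec n p) (vecb (n+1))| * √cP * ‖x‖ := by ring
  rw [hsplit, ip_mulVecE_add, ip_mulVecE_add]
  linarith [hS x, mul_pos hlQ (pow_pos hx0 2)]

theorem cond34_of_small (hxR : ∀ x, qf P x ≤ R ^ 2 → ‖x‖ ≤ a * R)
    (hfg : LocalQuadraticBound D f g p L₁) (hL₁ : 0 ≤ L₁) (hR : 0 < R) (hC1 : C ≤ 1)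
    (hρ : ((1 + ‖p‖) * a + |ip (cvec n p) (vecb (n+1))|) * R ≤ ρ) (hρ1 : ρ ≤ 1)
    (hρc : (1 + ‖cvec n p‖) * L₁ * a * ρ < C * ip (cvec n p) (vecb (n+1)) ^ 2) :
    Cond34 D f g P p R (C * R) := by
  intro d hd x u hx hu
  have hreg := add_abs_sub_le_of_qf_le hxR hρ hC1 hR.le hx hu
  have hρ0 : 0 ≤ ρ := (by positivity : 0 ≤ (1 + ‖p‖) * ‖x‖ + |u - ip p x|).trans hreg
  calc |g d x u + ip (cvec n p) (f d x u)|
      ≤ (1 + ‖cvec n p‖) * (‖f d x u‖ + |g d x u|) := abs_add_ip_le _ _ _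
    _ ≤ (1 + ‖cvec n p‖) * (L₁ * ρ * (a * R)) := by
        gcongr
        exact (hfg.norm_add_abs_le hL₁ hρ1 hd hreg).trans (by gcongr; exact hxR x hx)
    _ = (1 + ‖cvec n p‖) * L₁ * a * ρ * R := by ring
    _ < C * ip (cvec n p) (vecb (n+1)) ^ 2 * R := by gcongr
    _ = C * R * ip (cvec n p) (vecb (n+1)) ^ 2 := by ring

theorem cond35_of_small
    (hS : ∀ x, ip x (mulVecE P (mulVecE (matS n p) x)) ≤ -lQ * ‖x‖ ^ 2)
    (hlQ : 0 < lQ) (hcP : ∀ x y, |ip x (mulVecE P y)| ≤ cP * ‖x‖ * ‖y‖) (hcP0 : 0 ≤ cP)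
    (hxR : ∀ x, qf P x ≤ R ^ 2 → ‖x‖ ≤ a * R) (hfg : LocalQuadraticBound D f g p L₁)
    (hL₁ : 0 ≤ L₁) (hR : 0 < R) (hC0 : 0 < C) (hC1 : C ≤ 1)
    (hβ : ip (cvec n p) (vecb (n+1)) ≠ 0) {ω M δ : ℝ} (hω : 0 < ω) (hM0 : 0 < M)
    (hM : M * lQ = 4 * (C * R) * ω * cP ^ 2) (hδ0 : 0 ≤ δ)
    (hδμ : δ ≤ M * (C * R) * ip (cvec n p) (vecb (n+1)) ^ 2 * ω / 4) (hδP : cP * δ ≤ lQ / 4)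
    (hρ : ((1 + ‖p‖) * a + |ip (cvec n p) (vecb (n+1))|) * R ≤ ρ) (hρ1 : ρ ≤ 1)
    (hρf : cP * L₁ * ρ ≤ lQ / 4)
    (hρz : (1 + ‖cvec n p‖) * L₁ * ρ ≤ |ip (cvec n p) (vecb (n+1))| / 4)
    (hρxz : 4 * cP * ((1 + ‖cvec n p‖) * L₁) * (1 + ‖p‖) * ρ
      ≤ |ip (cvec n p) (vecb (n+1))| * lQ) :
    Cond35 D f g P p M R (C * R) ω δ := by
  set β := ip (cvec n p) (vecb (n+1)) with hβdef
  set K := C * R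
  have hK : 0 < K := by positivity
  intro d hd x z hx hz u hu
  rw [← hβdef] at hu ⊢
  have hv : |u - ip p x| = K * |β| * ω * |z| := by
    rw [hu, sub_sub_cancel_left, abs_neg, abs_mul, abs_mul, abs_mul, abs_of_pos hω, abs_of_pos hK]
  have hreg := add_abs_sub_le_of_qf_le hxR hρ hC1 hR.le hx (hv.trans_le (by
    rw [mul_assoc (K * |β|)]; exact mul_le_of_le_one_right (by positivity) hz))
  have hxρ : ‖x‖ ≤ ρ := by nlinarith [norm_nonneg p, abs_nonneg (u - ip p x), norm_nonneg x]
  have hF := hfg.abs_add_ip_le hd (hreg.trans hρ1) (cvec n p)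
  rw [hv] at hF
  have hbPx : |ip (vecb (n+1)) (mulVecE P x)| ≤ cP * ‖x‖ := by
    simpa [norm_vecb] using hcP (vecb (n+1)) x
  have hcross := cond35_cross_terms_le hK hω hcP0 hlQ hβ hM0 hM (norm_nonneg x) hF hbPx (le_trans (by gcongr) hρxz) (le_trans (by gcongr) hρz)
  have hδf : ip x (mulVecE P (δ • x + f d x u)) ≤ lQ / 2 * ‖x‖ ^ 2 := by
    refine ip_mulVecE_le_of_norm_le hcP hcP0 (k := δ + L₁ * ρ) ?_ (by linarith)
    calc ‖δ • x + f d x u‖ ≤ δ * ‖x‖ + (‖f d x u‖ + |g d x u|) := by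
          refine (norm_add_le _ _).trans ?_
          rw [norm_smul, Real.norm_of_nonneg hδ0]
          linarith [abs_nonneg (g d x u)]
      _ ≤ δ * ‖x‖ + L₁ * ρ * ‖x‖ := by gcongr; exact hfg.norm_add_abs_le hL₁ hρ1 hd hreg
      _ = (δ + L₁ * ρ) * ‖x‖ := by ring
  have hδz : δ * z ^ 2 ≤ M * K * β ^ 2 * ω / 4 * z ^ 2 := by gcongr
  change _ ≤ _ - ip x (mulVecE P (mulVecE (matS n p + δ • 1) x + f d x u))
  rw [mulVecE_add_smul_one, add_assoc, ip_mulVecE_add]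
  linarith [hS x]

theorem exists_cond35_of_small
    (hS : ∀ x, ip x (mulVecE P (mulVecE (matS n p) x)) ≤ -lQ * ‖x‖ ^ 2)
    (hlQ : 0 < lQ) (hcP : ∀ x y, |ip x (mulVecE P y)| ≤ cP * ‖x‖ * ‖y‖) (hcP0 : 0 < cP)
    (hxR : ∀ x, qf P x ≤ R ^ 2 → ‖x‖ ≤ a * R) (hfg : LocalQuadraticBound D f g p L₁)
    (hL₁ : 0 ≤ L₁) (hR : 0 < R) (hC0 : 0 < C) (hC1 : C ≤ 1)
    (hβ : ip (cvec n p) (vecb (n+1)) ≠ 0) {ω : ℝ} (hω : 0 < ω)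
    (hρ : ((1 + ‖p‖) * a + |ip (cvec n p) (vecb (n+1))|) * R ≤ ρ) (hρ1 : ρ ≤ 1)
    (hρf : cP * L₁ * ρ ≤ lQ / 4)
    (hρz : (1 + ‖cvec n p‖) * L₁ * ρ ≤ |ip (cvec n p) (vecb (n+1))| / 4)
    (hρxz : 4 * cP * ((1 + ‖cvec n p‖) * L₁) * (1 + ‖p‖) * ρ
      ≤ |ip (cvec n p) (vecb (n+1))| * lQ) :
    ∃ M δ, 0 < M ∧ 0 < δ ∧ Cond35 D f g P p M R (C * R) ω δ := by
  set M := 4 * (C * R) * ω * cP ^ 2 / lQ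
  have hM0 : 0 < M := by positivity
  have hμ : 0 < M * (C * R) * ip (cvec n p) (vecb (n+1)) ^ 2 * ω / 4 := by
    have := pow_pos (abs_pos.2 hβ) 2; rw [sq_abs] at this; positivity
  set δ := min (M * (C * R) * ip (cvec n p) (vecb (n+1)) ^ 2 * ω / 4) (lQ / (4 * cP))
  have hδ0 : 0 < δ := lt_min hμ (by positivity)
  have hδP : cP * δ ≤ lQ / 4 := by
    have := min_le_right (M * (C * R) * ip (cvec n p) (vecb (n+1)) ^ 2 * ω / 4) (lQ / (4 * cP))
    rw [le_div_iff₀ (by positivity)] at this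
    linarith
  exact ⟨M, δ, hM0, hδ0, cond35_of_small hS hlQ hcP hcP0.le hxR hfg hL₁ hR hC0 hC1 hβ hω hM0
    (div_mul_cancel₀ _ hlQ.ne') hδ0.le (min_le_left _ _) hδP hρ hρ1 hρf hρz hρxz⟩

end Estimates

theorem lemma_3_6_general (n l : ℕ)
    (D : Set (EuclideanSpace ℝ (Fin l)))
    (f : EuclideanSpace ℝ (Fin l) → EuclideanSpace ℝ (Fin (n+1)) → ℝ → EuclideanSpace ℝ (Fin (n+1)))
    (g : EuclideanSpace ℝ (Fin l) → EuclideanSpace ℝ (Fin (n+1)) → ℝ → ℝ)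
    (P : Matrix (Fin (n+1)) (Fin (n+1)) ℝ) (hP : P.PosDef)
    (p : EuclideanSpace ℝ (Fin (n+1)))
    (hneg : (-(P * (matA (n+1) + vecMulVec (vecbf (n+1)) (ef p))
        + ((matA (n+1))ᵀ + vecMulVec (ef p) (vecbf (n+1))) * P)).PosDef)
    (L : ℝ → ℝ) (hLmono : MonotoneOn L (Ici 0))
    (hLnn : ∀ s : ℝ, 0 ≤ s → 0 ≤ L s)
    (hgrowth : ∀ d ∈ D, ∀ x : EuclideanSpace ℝ (Fin (n+1)), ∀ u : ℝ,
      ‖f d x u‖ + |g d x u| ≤ L (Real.sqrt (‖x‖ ^ 2 + u ^ 2)) * ‖x‖ ^ 2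
        + L (Real.sqrt (‖x‖ ^ 2 + u ^ 2)) * ‖x‖ * |u|) :
    ∃ Rstar C : ℝ, 0 < Rstar ∧ 0 < C ∧ C ≤ 1 ∧
      ∀ ω R : ℝ, 0 < ω → 0 < R → R < Rstar →
        ∃ M δ : ℝ, 0 < M ∧ 0 < δ ∧
          Cond33 D f P p R (C * R) ∧ Cond34 D f g P p R (C * R) ∧
            Cond35 D f g P p M R (C * R) ω δ := by
  rw [← matS, ← transpose_matS] at hneg
  obtain ⟨a, ha, hxR⟩ := hP.exists_norm_le_mul_of_qf_le_sq
  obtain ⟨lQ, hlQ, hS⟩ := exists_ip_mulVecE_mulVecE_le (isHermitian_iff_isSymm.1 hP.isHermitian) hneg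
  obtain ⟨cP, hcP0, hcP⟩ := exists_abs_ip_mulVecE_le P
  have hβ := ip_cvec_vecb_ne_zero (det_ne_zero_of_posDef_neg_lyapunov hneg)
  set β := ip (cvec n p) (vecb (n+1))
  have hfg : LocalQuadraticBound D f g p (L 1) := localQuadraticBound_of_growth hLmono hLnn hgrowth
  have hL₁ : 0 ≤ L 1 := hLnn 1 zero_le_one
  obtain ⟨C, hC0, hC1, hC⟩ := exists_pos_le_one_mul_le (k := cP * |β| * √cP) (by positivity)
    (by positivity : 0 < lQ / 4)
  have hsmall : ∀ᶠ ρ in 𝓝 (0 : ℝ), ρ < 1 ∧ cP * L 1 * ρ < lQ / 4 ∧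
      (1 + ‖cvec n p‖) * L 1 * a * ρ < C * β ^ 2 ∧ (1 + ‖cvec n p‖) * L 1 * ρ < |β| / 4 ∧
      4 * cP * ((1 + ‖cvec n p‖) * L 1) * (1 + ‖p‖) * ρ < |β| * lQ :=
    (eventually_lt_nhds one_pos).and <| (eventually_mul_lt _ (by positivity)).and <|
      (eventually_mul_lt _ (by positivity)).and <| (eventually_mul_lt _ (by positivity)).and <|
      eventually_mul_lt _ (by positivity)
  obtain ⟨Rstar, hRstar, hsub⟩ := exists_pos_forall_mul_of_eventually hsmall ((1 + ‖p‖) * a + |β|)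
  refine ⟨Rstar, C, hRstar, hC0, hC1, fun ω R hω hR hRR => ?_⟩
  obtain ⟨h1, h2, h3, h4, h5⟩ := hsub R hR hRR
  obtain ⟨M, δ, hM, hδ, h35⟩ := exists_cond35_of_small hS hlQ hcP hcP0 (hxR hR.le) hfg hL₁ hR
    hC0 hC1 hβ hω le_rfl h1.le h2.le h4.le h5.le
  exact ⟨M, δ, hM, hδ, cond33_of_small hS hlQ hcP hcP0.le (hxR hR.le) hfg hL₁ hR hC0.le hC1 hC
    le_rfl h1.le h2.le, cond34_of_small (hxR hR.le) hfg hL₁ hR hC1 le_rfl h1.le h3, h35⟩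

/-- **Lemma 3.6.** If the nonlinearities `f, g` satisfy the quadratic growth bound (3.17),
then there exist `R* > 0` and `C ∈ (0,1]` such that for every `ω > 0` and `R ∈ (0,R*)`
there exist `M, δ > 0` such that (3.3), (3.4), (3.5) hold with `K = C·R`. -/
theorem lemma_3_6 (n l : ℕ)
    (D : Set (EuclideanSpace ℝ (Fin l))) (hD : D.Nonempty) (hDc : IsCompact D)
    (f : EuclideanSpace ℝ (Fin l) → EuclideanSpace ℝ (Fin (n+1)) → ℝ → EuclideanSpace ℝ (Fin (n+1)))
    (g : EuclideanSpace ℝ (Fin l) → EuclideanSpace ℝ (Fin (n+1)) → ℝ → ℝ)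
    (hfLip : LocallyLipschitz
      (fun q : EuclideanSpace ℝ (Fin l) × EuclideanSpace ℝ (Fin (n+1)) × ℝ => f q.1 q.2.1 q.2.2))
    (hgLip : LocallyLipschitz
      (fun q : EuclideanSpace ℝ (Fin l) × EuclideanSpace ℝ (Fin (n+1)) × ℝ => g q.1 q.2.1 q.2.2))
    (hf0 : ∀ d ∈ D, f d 0 0 = 0) (hg0 : ∀ d ∈ D, g d 0 0 = 0)
    (P : Matrix (Fin (n+1)) (Fin (n+1)) ℝ) (hP : P.PosDef)
    (p : EuclideanSpace ℝ (Fin (n+1)))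
    (hneg : (-(P * (matA (n+1) + vecMulVec (vecbf (n+1)) (ef p))
        + ((matA (n+1))ᵀ + vecMulVec (ef p) (vecbf (n+1))) * P)).PosDef)
    (L : ℝ → ℝ) (hLc : ContinuousOn L (Ici 0)) (hLmono : MonotoneOn L (Ici 0))
    (hLnn : ∀ s : ℝ, 0 ≤ s → 0 ≤ L s)
    (hgrowth : ∀ d ∈ D, ∀ x : EuclideanSpace ℝ (Fin (n+1)), ∀ u : ℝ,
      ‖f d x u‖ + |g d x u| ≤ L (Real.sqrt (‖x‖ ^ 2 + u ^ 2)) * ‖x‖ ^ 2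
        + L (Real.sqrt (‖x‖ ^ 2 + u ^ 2)) * ‖x‖ * |u|) :
    ∃ Rstar C : ℝ, 0 < Rstar ∧ 0 < C ∧ C ≤ 1 ∧
      ∀ ω R : ℝ, 0 < ω → 0 < R → R < Rstar →
        ∃ M δ : ℝ, 0 < M ∧ 0 < δ ∧
          Cond33 D f P p R (C * R) ∧ Cond34 D f g P p R (C * R) ∧
            Cond35 D f g P p M R (C * R) ω δ :=
  lemma_3_6_general n l D f g P hP p hneg L hLmono hLnn hgrowth
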